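/- arXiv:2508.01400 — 3 statements merged into one kernel-verified Lean document; each statement's English description precedes it below -/
import Mathlib

section
/- Let G=(V,E) be a finite connected graph with m edges, let w_{0,e}>0 be initial weights, fix α∈[0,1] and a step size s with 0<s<1. Define iterates by w_e^{(0)}=w_{0,e} and w_e^{(j+1)} = w_e^{(j)} − s·κ_e^{(j)}·ρ_e^{(j)}, where ρ_e^{(j)} and κ_e^{(j)} denote the distance and Ollivier's α-Ricci curvature of the edge e computed from the weights w^{(j)}. Then every iterate is strictly positive (so the flow has a unique global solution) and for all j∈ℕ and all e∈E: (1−s)^j·w_{0,e} ≤ w_e^{(j)} ≤ (1+ms)^j·∑_{τ∈E} w_{0,τ}. -/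
open Finset

section RicciDefs

variable {V : Type*}

/-- The sum of the weights of the edges of a walk. -/
noncomputable def walkWeight {G : SimpleGraph V} (w : Sym2 V → ℝ) {u v : V} (p : G.Walk u v) : ℝ :=
  (p.edges.map w).sum

/-- The weighted graph distance: infimum of total weight over walks joining `u` and `v`. -/
noncomputable def gdist (G : SimpleGraph V) (w : Sym2 V → ℝ) (u v : V) : ℝ :=
  sInf {x : ℝ | ∃ p : G.Walk u v, x = walkWeight w p}

/-- A choice of ordered endpoints of an unordered pair. -/
noncomputable def endpoints (e : Sym2 V) : V × V := Quot.out e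

/-- The weighted distance between the endpoints of an edge. -/
noncomputable def edist (G : SimpleGraph V) (w : Sym2 V → ℝ) (e : Sym2 V) : ℝ :=
  gdist G w (endpoints e).1 (endpoints e).2

/-- The `α`-lazy one-step random walk at `x`. -/
noncomputable def lazyWalk (G : SimpleGraph V) [Fintype V] [DecidableEq V] [DecidableRel G.Adj]
    (w : Sym2 V → ℝ) (α : ℝ) (x : V) : V → ℝ := fun z =>
  if z = x then α
  else if G.Adj x z then (1 - α) * w s(x, z) / ∑ u ∈ G.neighborFinset x, w s(x, u)
  else 0

/-- A probability measure on a finite vertex set. -/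
def IsProbMeasure [Fintype V] (μ : V → ℝ) : Prop :=
  (∀ x, 0 ≤ μ x) ∧ ∑ x, μ x = 1

/-- A coupling between two probability measures. -/
def IsCoupling [Fintype V] (μ₁ μ₂ : V → ℝ) (A : V → V → ℝ) : Prop :=
  (∀ u v, A u v ∈ Set.Icc (0 : ℝ) 1) ∧ (∀ u, ∑ x, A u x = μ₁ u) ∧ (∀ v, ∑ y, A y v = μ₂ v)

/-- The Wasserstein distance between two probability measures. -/
noncomputable def wasserstein [Fintype V] (G : SimpleGraph V) (w : Sym2 V → ℝ)
    (μ₁ μ₂ : V → ℝ) : ℝ :=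
  sInf {x : ℝ | ∃ A : V → V → ℝ, IsCoupling μ₁ μ₂ A ∧ x = ∑ u, ∑ v, A u v * gdist G w u v}

/-- Ollivier's `α`-Ricci curvature of an edge. -/
noncomputable def ollivier [Fintype V] [DecidableEq V] (G : SimpleGraph V) [DecidableRel G.Adj]
    (w : Sym2 V → ℝ) (α : ℝ) (e : Sym2 V) : ℝ :=
  1 - wasserstein G w (lazyWalk G w α (endpoints e).1) (lazyWalk G w α (endpoints e).2)
        / edist G w e

end RicciDefs
section AuxProof

open SimpleGraph

variable {V : Type*}

lemma walkWeight_nonneg' {G : SimpleGraph V} {w : Sym2 V → ℝ}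
    (hw : ∀ e ∈ G.edgeSet, 0 ≤ w e) {u v : V} (p : G.Walk u v) :
    0 ≤ walkWeight w p := by
  apply List.sum_nonneg
  intro x hx
  obtain ⟨e, he, rfl⟩ := List.mem_map.mp hx
  exact hw e (p.edges_subset_edgeSet he)

lemma gdist_nonneg' {G : SimpleGraph V} {w : Sym2 V → ℝ}
    (hw : ∀ e ∈ G.edgeSet, 0 ≤ w e) (u v : V) : 0 ≤ gdist G w u v := by
  apply Real.sInf_nonneg
  rintro x ⟨p, rfl⟩
  exact walkWeight_nonneg' hw p

lemma gdist_bddBelow {G : SimpleGraph V} {w : Sym2 V → ℝ}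
    (hw : ∀ e ∈ G.edgeSet, 0 ≤ w e) (u v : V) :
    BddBelow {x : ℝ | ∃ p : G.Walk u v, x = walkWeight w p} := by
  refine ⟨0, ?_⟩
  rintro x ⟨p, rfl⟩
  exact walkWeight_nonneg' hw p

lemma gdist_le_walkWeight {G : SimpleGraph V} {w : Sym2 V → ℝ}
    (hw : ∀ e ∈ G.edgeSet, 0 ≤ w e) {u v : V} (p : G.Walk u v) :
    gdist G w u v ≤ walkWeight w p :=
  csInf_le (gdist_bddBelow hw u v) ⟨p, rfl⟩

lemma endpoints_mk {e : Sym2 V} : s((endpoints e).1, (endpoints e).2) = e := by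
  rw [endpoints]; exact Quot.out_eq e

lemma adj_endpoints {G : SimpleGraph V} {e : Sym2 V} (he : e ∈ G.edgeSet) :
    G.Adj (endpoints e).1 (endpoints e).2 := by
  rw [← SimpleGraph.mem_edgeSet, endpoints_mk]; exact he

lemma edist_le_weight {G : SimpleGraph V} {w : Sym2 V → ℝ}
    (hw : ∀ e ∈ G.edgeSet, 0 ≤ w e) {e : Sym2 V} (he : e ∈ G.edgeSet) :
    edist G w e ≤ w e := by
  have hadj := adj_endpoints he
  have h := gdist_le_walkWeight hw (SimpleGraph.Walk.cons hadj SimpleGraph.Walk.nil)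
  rw [_root_.edist]
  refine h.trans ?_
  have h2 : s((endpoints e).1, (endpoints e).2) = e := endpoints_mk
  simp [walkWeight, Prod.mk.eta, h2]

lemma walkWeight_ge_min {G : SimpleGraph V} {w : Sym2 V → ℝ}
    (hw : ∀ e ∈ G.edgeSet, 0 ≤ w e) {c : ℝ} (hc : ∀ e ∈ G.edgeSet, c ≤ w e)
    {u v : V} (huv : u ≠ v) (p : G.Walk u v) : c ≤ walkWeight w p := by
  cases p with
  | nil => exact absurd rfl huv
  | @cons _ b _ h q =>
    rw [walkWeight]
    simp only [SimpleGraph.Walk.edges_cons, List.map_cons, List.sum_cons]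
    have h1 : c ≤ w s(u, b) := hc _ h
    have h2 : 0 ≤ (q.edges.map w).sum := walkWeight_nonneg' hw q
    linarith

lemma edist_pos' {G : SimpleGraph V} [Fintype V] [DecidableEq V] [DecidableRel G.Adj]
    (hconn : G.Connected) {w : Sym2 V → ℝ}
    (hw : ∀ e ∈ G.edgeFinset, 0 < w e) {e : Sym2 V} (he : e ∈ G.edgeFinset) :
    0 < edist G w e := by
  have hw' : ∀ τ ∈ G.edgeSet, 0 < w τ := fun τ hτ =>
    hw τ (SimpleGraph.mem_edgeFinset.mpr hτ)
  have hne : (G.edgeFinset.image w).Nonempty := ⟨w e, Finset.mem_image_of_mem w he⟩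
  set c := (G.edgeFinset.image w).min' hne with hc
  have hcpos : 0 < c := by
    obtain ⟨e', he', hce⟩ := Finset.mem_image.mp ((G.edgeFinset.image w).min'_mem hne)
    rw [hc, ← hce]
    exact hw e' he'
  have hcle : ∀ τ ∈ G.edgeSet, c ≤ w τ := fun τ hτ =>
    Finset.min'_le _ _ (Finset.mem_image_of_mem w (SimpleGraph.mem_edgeFinset.mpr hτ))
  have hne2 : (endpoints e).1 ≠ (endpoints e).2 :=
    (adj_endpoints (SimpleGraph.mem_edgeFinset.mp he)).ne
  have hmain : c ≤ edist G w e := by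
    rw [_root_.edist, gdist]
    apply le_csInf
    · obtain ⟨p⟩ := hconn.preconnected (endpoints e).1 (endpoints e).2
      exact ⟨walkWeight w p, p, rfl⟩
    · rintro x ⟨p, rfl⟩
      exact walkWeight_ge_min (fun τ hτ => (hw' τ hτ).le) hcle hne2 p
  linarith

lemma gdist_le_total {G : SimpleGraph V} [Fintype V] [DecidableEq V] [DecidableRel G.Adj]
    (hconn : G.Connected) {w : Sym2 V → ℝ}
    (hw : ∀ e ∈ G.edgeFinset, 0 ≤ w e) (u v : V) :
    gdist G w u v ≤ ∑ τ ∈ G.edgeFinset, w τ := by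
  have hw' : ∀ τ ∈ G.edgeSet, 0 ≤ w τ := fun τ hτ =>
    hw τ (SimpleGraph.mem_edgeFinset.mpr hτ)
  obtain ⟨p⟩ := hconn.preconnected u v
  refine (gdist_le_walkWeight hw' (p.toPath : G.Walk u v)).trans ?_
  set q := (p.toPath : G.Walk u v) with hq
  have hnd : q.edges.Nodup := p.toPath.2.edges_nodup
  rw [walkWeight, ← List.sum_toFinset w hnd]
  apply Finset.sum_le_sum_of_subset_of_nonneg
  · intro τ hτ
    exact SimpleGraph.mem_edgeFinset.mpr (q.edges_subset_edgeSet (List.mem_toFinset.mp hτ))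
  · intro τ hτ _
    exact hw τ hτ

lemma lazyWalk_prob {G : SimpleGraph V} [Fintype V] [DecidableEq V] [DecidableRel G.Adj]
    {w : Sym2 V → ℝ} (hw : ∀ e ∈ G.edgeSet, 0 < w e) {α : ℝ} (hα : α ∈ Set.Icc (0:ℝ) 1)
    {x : V} (hx : (G.neighborFinset x).Nonempty) :
    IsProbMeasure (lazyWalk G w α x) := by
  have hwpos : ∀ u ∈ G.neighborFinset x, 0 < w s(x, u) := by
    intro u hu
    exact hw _ ((G.mem_neighborFinset x u).mp hu)
  have hS : 0 < ∑ u ∈ G.neighborFinset x, w s(x,u) := Finset.sum_pos hwpos hx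
  constructor
  · intro z
    rw [lazyWalk]
    split_ifs with h1 h2
    · exact hα.1
    · apply div_nonneg _ hS.le
      apply mul_nonneg (by linarith [hα.2])
      exact (hw _ ((G.mem_edgeSet).mpr h2)).le
    · exact le_refl 0
  · have hx0 : lazyWalk G w α x x = α := by simp [lazyWalk]
    have hsplit : ∑ z, lazyWalk G w α x z
        = lazyWalk G w α x x + ∑ z ∈ Finset.univ.erase x, lazyWalk G w α x z :=
      (Finset.add_sum_erase _ _ (Finset.mem_univ x)).symm
    have hfil : (Finset.univ.erase x).filter (G.Adj x) = G.neighborFinset x := by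
      ext z
      constructor
      · intro h
        rw [SimpleGraph.mem_neighborFinset]
        exact (Finset.mem_filter.mp h).2
      · intro h
        rw [SimpleGraph.mem_neighborFinset] at h
        exact Finset.mem_filter.mpr ⟨Finset.mem_erase.mpr ⟨h.ne', Finset.mem_univ z⟩, h⟩
    have h2 : ∑ z ∈ Finset.univ.erase x, lazyWalk G w α x z
        = ∑ z ∈ G.neighborFinset x,
            (1 - α) * w s(x, z) / (∑ u ∈ G.neighborFinset x, w s(x,u)) := by
      have hstep : ∀ z ∈ Finset.univ.erase x, lazyWalk G w α x z
          = if G.Adj x z then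
              (1 - α) * w s(x, z) / (∑ u ∈ G.neighborFinset x, w s(x,u)) else 0 := by
        intro z hz
        rw [lazyWalk, if_neg (Finset.ne_of_mem_erase hz)]
      rw [Finset.sum_congr rfl hstep, ← Finset.sum_filter, hfil]
    have h3 : ∑ z ∈ G.neighborFinset x,
        (1 - α) * w s(x, z) / (∑ u ∈ G.neighborFinset x, w s(x,u)) = 1 - α := by
      rw [← Finset.sum_div, ← Finset.mul_sum, mul_div_assoc, div_self hS.ne', mul_one]
    rw [hsplit, hx0, h2, h3]
    ring

lemma wasserstein_nonneg {G : SimpleGraph V} [Fintype V] {w : Sym2 V → ℝ}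
    (hg : ∀ u v, 0 ≤ gdist G w u v) (μ₁ μ₂ : V → ℝ) :
    0 ≤ wasserstein G w μ₁ μ₂ := by
  rw [wasserstein]
  apply Real.sInf_nonneg
  rintro x ⟨A, hA, rfl⟩
  apply Finset.sum_nonneg
  intro u _
  apply Finset.sum_nonneg
  intro v _
  exact mul_nonneg (hA.1 u v).1 (hg u v)

lemma wasserstein_le_of_bound {G : SimpleGraph V} [Fintype V] {w : Sym2 V → ℝ}
    (hg : ∀ u v, 0 ≤ gdist G w u v) {μ₁ μ₂ : V → ℝ}
    (h₁ : IsProbMeasure μ₁) (h₂ : IsProbMeasure μ₂)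
    {D : ℝ} (hD : ∀ u v, gdist G w u v ≤ D) :
    wasserstein G w μ₁ μ₂ ≤ D := by
  have hbdd : BddBelow {x : ℝ | ∃ A, IsCoupling μ₁ μ₂ A ∧
      x = ∑ u, ∑ v, A u v * gdist G w u v} := by
    refine ⟨0, ?_⟩
    rintro x ⟨A, hA, rfl⟩
    apply Finset.sum_nonneg
    intro u _
    apply Finset.sum_nonneg
    intro v _
    exact mul_nonneg (hA.1 u v).1 (hg u v)
  have hle1 : ∀ (μ : V → ℝ), IsProbMeasure μ → ∀ x, μ x ≤ 1 := by
    intro μ hμ x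
    rw [← hμ.2]
    exact Finset.single_le_sum (fun i _ => hμ.1 i) (Finset.mem_univ x)
  rw [wasserstein]
  have hmem : (∑ u, ∑ v, (μ₁ u * μ₂ v) * gdist G w u v) ∈
      {x : ℝ | ∃ A, IsCoupling μ₁ μ₂ A ∧ x = ∑ u, ∑ v, A u v * gdist G w u v} := by
    refine ⟨fun u v => μ₁ u * μ₂ v, ⟨⟨fun u v => ⟨mul_nonneg (h₁.1 u) (h₂.1 v), ?_⟩,
      fun u => by rw [← Finset.mul_sum, h₂.2, mul_one],
      fun v => by rw [← Finset.sum_mul, h₁.2, one_mul]⟩, rfl⟩⟩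
    exact mul_le_one₀ (hle1 _ h₁ u) (h₂.1 v) (hle1 _ h₂ v)
  refine csInf_le_of_le hbdd hmem ?_
  calc ∑ u, ∑ v, (μ₁ u * μ₂ v) * gdist G w u v
        ≤ ∑ u, ∑ v, μ₁ u * (μ₂ v * D) := by
          apply Finset.sum_le_sum
          intro u _
          apply Finset.sum_le_sum
          intro v _
          rw [← mul_assoc]
          exact mul_le_mul_of_nonneg_left (hD u v) (mul_nonneg (h₁.1 u) (h₂.1 v))
      _ = D := by
          have h1 : ∀ u, ∑ v, μ₁ u * (μ₂ v * D) = μ₁ u * D := by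
            intro u
            rw [← Finset.mul_sum, ← Finset.sum_mul, h₂.2, one_mul]
          simp_rw [h1]
          rw [← Finset.sum_mul, h₁.2, one_mul]

lemma flow_step {V : Type*} [Fintype V] [DecidableEq V]
    (G : SimpleGraph V) [DecidableRel G.Adj] (hconn : G.Connected)
    {α : ℝ} (hα : α ∈ Set.Icc (0 : ℝ) 1)
    {w : Sym2 V → ℝ} (hw : ∀ e ∈ G.edgeFinset, 0 < w e)
    {e : Sym2 V} (he : e ∈ G.edgeFinset) :
    -(∑ τ ∈ G.edgeFinset, w τ) ≤ ollivier G w α e * edist G w e ∧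
    ollivier G w α e * edist G w e ≤ w e := by
  have hwS : ∀ τ ∈ G.edgeSet, 0 < w τ := fun τ hτ =>
    hw τ (SimpleGraph.mem_edgeFinset.mpr hτ)
  have hw0 : ∀ τ ∈ G.edgeSet, 0 ≤ w τ := fun τ hτ => (hwS τ hτ).le
  have hg0 : ∀ u v, 0 ≤ gdist G w u v := gdist_nonneg' hw0
  have hρpos := edist_pos' hconn hw he
  have hρle := edist_le_weight hw0 (SimpleGraph.mem_edgeFinset.mp he)
  have hadj := adj_endpoints (SimpleGraph.mem_edgeFinset.mp he)
  have hμ₁ := lazyWalk_prob hwS hα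
    ⟨(endpoints e).2, (G.mem_neighborFinset _ _).mpr hadj⟩
  have hμ₂ := lazyWalk_prob hwS hα
    ⟨(endpoints e).1, (G.mem_neighborFinset _ _).mpr hadj.symm⟩
  set W := wasserstein G w (lazyWalk G w α (endpoints e).1) (lazyWalk G w α (endpoints e).2)
    with hWdef
  have hW0 : 0 ≤ W := wasserstein_nonneg hg0 _ _
  have hWle : W ≤ ∑ τ ∈ G.edgeFinset, w τ :=
    wasserstein_le_of_bound hg0 hμ₁ hμ₂
      (fun u v => gdist_le_total hconn (fun τ hτ => (hw τ hτ).le) u v)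
  have hkey : ollivier G w α e * edist G w e = edist G w e - W := by
    rw [ollivier, ← hWdef, sub_mul, one_mul, div_mul_cancel₀ _ hρpos.ne']
  constructor <;> [skip; skip] <;> rw [hkey] <;> linarith

end AuxProof

/-- Theorem 2.1 (i): bounds for the discrete Ricci curvature flow with Ollivier's curvature. -/
theorem ollivier_flow_bounds {V : Type*} [Fintype V] [DecidableEq V]
    (G : SimpleGraph V) [DecidableRel G.Adj] (hconn : G.Connected)
    (m : ℕ) (hm : G.edgeFinset.card = m)
    (α : ℝ) (hα : α ∈ Set.Icc (0 : ℝ) 1)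
    (s : ℝ) (hs0 : 0 < s) (hs1 : s < 1)
    (w : ℕ → Sym2 V → ℝ)
    (hpos0 : ∀ e ∈ G.edgeFinset, 0 < w 0 e)
    (hflow : ∀ j : ℕ, ∀ e ∈ G.edgeFinset,
      w (j + 1) e = w j e - s * ollivier G (w j) α e * edist G (w j) e) :
    ∀ j : ℕ, ∀ e ∈ G.edgeFinset,
      0 < w j e ∧
      (1 - s) ^ j * w 0 e ≤ w j e ∧
      w j e ≤ (1 + (m : ℝ) * s) ^ j * ∑ τ ∈ G.edgeFinset, w 0 τ := by
  intro j
  induction j with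
  | zero =>
    intro e he
    refine ⟨hpos0 e he, by simp, ?_⟩
    simp only [pow_zero, one_mul]
    exact Finset.single_le_sum (fun τ hτ => (hpos0 τ hτ).le) he
  | succ j ih =>
    have hwpos : ∀ e ∈ G.edgeFinset, 0 < w j e := fun e he => (ih e he).1
    intro e he
    obtain ⟨hlow, hup⟩ := flow_step G hconn hα hwpos he
    have heq := hflow j e he
    have hmul1 : s * (ollivier G (w j) α e * edist G (w j) e) ≤ s * w j e :=
      mul_le_mul_of_nonneg_left hup hs0.le
    have hmul2 : s * (-(∑ τ ∈ G.edgeFinset, w j τ)) ≤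
        s * (ollivier G (w j) α e * edist G (w j) e) :=
      mul_le_mul_of_nonneg_left hlow hs0.le
    have hSig : ∑ τ ∈ G.edgeFinset, w j τ ≤
        (m : ℝ) * ((1 + (m : ℝ) * s) ^ j * ∑ τ ∈ G.edgeFinset, w 0 τ) := by
      calc ∑ τ ∈ G.edgeFinset, w j τ
          ≤ ∑ _τ ∈ G.edgeFinset, (1 + (m : ℝ) * s) ^ j * ∑ τ ∈ G.edgeFinset, w 0 τ :=
            Finset.sum_le_sum (fun τ hτ => (ih τ hτ).2.2)
        _ = _ := by rw [Finset.sum_const, hm, nsmul_eq_mul]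
    have hmul3 : s * (∑ τ ∈ G.edgeFinset, w j τ) ≤
        s * ((m : ℝ) * ((1 + (m : ℝ) * s) ^ j * ∑ τ ∈ G.edgeFinset, w 0 τ)) :=
      mul_le_mul_of_nonneg_left hSig hs0.le
    have hposj := hwpos e he
    have hlowj := (ih e he).2.1
    have hupj := (ih e he).2.2
    have h1s : (0:ℝ) < 1 - s := by linarith
    have hmul4 : (1 - s) * ((1 - s) ^ j * w 0 e) ≤ (1 - s) * w j e :=
      mul_le_mul_of_nonneg_left hlowj h1s.le
    have hr1 : (1 - s) ^ (j + 1) * w 0 e = (1 - s) * ((1 - s) ^ j * w 0 e) := by ring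
    have hr2 : (1 + (m : ℝ) * s) ^ (j + 1) * ∑ τ ∈ G.edgeFinset, w 0 τ
        = (1 + (m : ℝ) * s) ^ j * (∑ τ ∈ G.edgeFinset, w 0 τ)
          + s * ((m : ℝ) * ((1 + (m : ℝ) * s) ^ j * ∑ τ ∈ G.edgeFinset, w 0 τ)) := by
      ring
    refine ⟨?_, ?_, ?_⟩
    · rw [heq]; nlinarith
    · rw [heq, hr1]; linarith
    · rw [heq, hr2]; linarith
end

section
/- Let G=(V,E) be a finite connected graph with m edges, let w_{0,e}>0 be initial weights, fix θ>1 and a step size s with 0<s<1/2. Define iterates by w_e^{(0)}=w_{0,e} and w_e^{(j+1)} = w_e^{(j)} − s·κ_e^{(j)}·w_e^{(j)}, where κ_e^{(j)} is Lin–Lu–Yau's Ricci curvature of the edge e computed from the weights w^{(j)} (the defining limits are assumed to exist at every step, and the curvature satisfies −(2/ρ_e)·max_{τ∈E} w_τ ≤ κ_e ≤ 2), and assume that at every step j and every edge e the θ-surgery condition w_e^{(j)}/ρ_e^{(j)} ≤ θ holds, where ρ_e^{(j)} is the distance of the endpoints of e in the weights w^{(j)}. Then every iterate is strictly positive (so the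 flow has a unique global solution) and for all j∈ℕ and all e∈E: (1−2s)^j·w_{0,e} ≤ w_e^{(j)} ≤ (1+2mθs)^j·∑_{τ∈E} w_{0,τ}. -/
open Finset

/-!
Both bounds come from comparing one step of the flow with the previous one. Since `κ ≤ 2`,
every weight shrinks at most by the factor `1 - 2s > 0` per step, which gives positivity and
the lower bound. Conversely, the curvature lower bound `-(2/ρ_e) max_τ w_τ ≤ κ_e` and the
surgery condition `w_e/ρ_e ≤ θ` give `w_e' ≤ w_e + 2sθ max_τ w_τ`; bounding the maximum by the
total weight and summing over the `m` edges, the total weight grows at most by the factor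
`1 + 2mθs` per step, and it dominates every single weight.
-/

section FlowStep

variable {s w κ ρ θ M : ℝ}

theorem one_sub_two_mul_le_flowStep (hs : 0 ≤ s) (hw : 0 ≤ w) (hκ : κ ≤ 2) :
    (1 - 2 * s) * w ≤ w - s * κ * w := by
  nlinarith [mul_nonneg (mul_nonneg hs hw) (sub_nonneg.2 hκ)]

theorem flowStep_le_add_mul (hs : 0 ≤ s) (hw : 0 ≤ w) (hM : 0 ≤ M)
    (hκ : -(2 / ρ) * M ≤ κ) (hθ : w / ρ ≤ θ) :
    w - s * κ * w ≤ w + 2 * s * θ * M :=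
  calc w - s * κ * w = w + s * w * -κ := by ring
    _ ≤ w + s * w * (2 / ρ * M) := by gcongr; linarith
    _ = w + 2 * s * M * (w / ρ) := by ring
    _ ≤ w + 2 * s * M * θ := by gcongr
    _ = w + 2 * s * θ * M := by ring

end FlowStep

section EdgeFlow

variable {s : ℝ} {a k : ℕ → ℝ}

theorem flow_pos (hs0 : 0 ≤ s) (hs1 : s < 1 / 2) (ha : 0 < a 0) (hk : ∀ j, k j ≤ 2)
    (hflow : ∀ j, a (j + 1) = a j - s * k j * a j) (j : ℕ) : 0 < a j := by
  induction j with
  | zero => exact ha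
  | succ j ih =>
    rw [hflow]
    exact (mul_pos (by linarith) ih).trans_le (one_sub_two_mul_le_flowStep hs0 ih.le (hk j))

theorem one_sub_two_mul_pow_le_flow (hs0 : 0 ≤ s) (hs1 : s < 1 / 2) (ha : 0 < a 0)
    (hk : ∀ j, k j ≤ 2) (hflow : ∀ j, a (j + 1) = a j - s * k j * a j) (j : ℕ) :
    (1 - 2 * s) ^ j * a 0 ≤ a j :=
  geom_le (by linarith) j fun i _ => hflow i ▸
    one_sub_two_mul_le_flowStep hs0 (flow_pos hs0 hs1 ha hk hflow i).le (hk i)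

end EdgeFlow

theorem sum_le_one_add_card_mul_sum {ι : Type*} {E : Finset ι} {u v : ι → ℝ} {c : ℝ}
    (hc : 0 ≤ c) (hu : ∀ e ∈ E, 0 ≤ u e)
    (huv : ∀ e (he : e ∈ E), v e ≤ u e + c * E.sup' ⟨e, he⟩ u) :
    ∑ e ∈ E, v e ≤ (1 + #E * c) * ∑ e ∈ E, u e :=
  calc ∑ e ∈ E, v e ≤ ∑ e ∈ E, (u e + c * ∑ τ ∈ E, u τ) := by
        refine sum_le_sum fun e he => (huv e he).trans ?_
        gcongr
        exact sup'_le _ _ fun τ hτ => single_le_sum hu hτ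
    _ = (1 + #E * c) * ∑ e ∈ E, u e := by
        rw [sum_add_distrib, sum_const, nsmul_eq_mul]
        ring

theorem sum_flow_le {ι : Type*} {E : Finset ι} {s θ : ℝ} {w κ ρ : ℕ → ι → ℝ}
    (hs : 0 ≤ s) (hθ : 0 ≤ θ) (hpos : ∀ j, ∀ e ∈ E, 0 < w j e)
    (hκ : ∀ j e (he : e ∈ E), -(2 / ρ j e) * E.sup' ⟨e, he⟩ (w j) ≤ κ j e)
    (hflow : ∀ j, ∀ e ∈ E, w (j + 1) e = w j e - s * κ j e * w j e)
    (hsurg : ∀ j, ∀ e ∈ E, w j e / ρ j e ≤ θ) (j : ℕ) :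
    ∑ e ∈ E, w j e ≤ (1 + 2 * #E * θ * s) ^ j * ∑ e ∈ E, w 0 e := by
  refine le_geom (u := fun i => ∑ e ∈ E, w i e) (by positivity) j fun i _ => ?_
  have hstep := sum_le_one_add_card_mul_sum (mul_nonneg (mul_nonneg zero_le_two hs) hθ)
    (fun e he => (hpos i e he).le) fun e he => hflow i e he ▸
      flowStep_le_add_mul hs (hpos i e he).le
        ((hpos i e he).le.trans (le_sup' (w i) he)) (hκ i e he) (hsurg i e he)
  convert hstep using 2
  ring

theorem lly_flow_surgery_bounds_general {V : Type*} [Fintype V]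
    (G : SimpleGraph V) [DecidableRel G.Adj]
    (m : ℕ) (hm : G.edgeFinset.card = m)
    (θ : ℝ) (hθ : 1 < θ)
    (s : ℝ) (hs0 : 0 < s) (hs1 : s < 1 / 2)
    (w : ℕ → Sym2 V → ℝ) (κ : ℕ → Sym2 V → ℝ)
    (hpos0 : ∀ e ∈ G.edgeFinset, 0 < w 0 e)
    -- the curvature bounds −(2/ρ_e)·max_{τ∈E} w_τ ≤ κ_e ≤ 2
    (hbound : ∀ (j : ℕ) (e : Sym2 V) (he : e ∈ G.edgeFinset),
      -(2 / edist G (w j) e) * G.edgeFinset.sup' ⟨e, he⟩ (w j) ≤ κ j e ∧ κ j e ≤ 2)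
    (hflow : ∀ j : ℕ, ∀ e ∈ G.edgeFinset,
      w (j + 1) e = w j e - s * κ j e * w j e)
    -- θ-surgery condition at every step
    (hsurg : ∀ j : ℕ, ∀ e ∈ G.edgeFinset, w j e / edist G (w j) e ≤ θ) :
    ∀ j : ℕ, ∀ e ∈ G.edgeFinset,
      0 < w j e ∧
      (1 - 2 * s) ^ j * w 0 e ≤ w j e ∧
      w j e ≤ (1 + 2 * (m : ℝ) * θ * s) ^ j * ∑ τ ∈ G.edgeFinset, w 0 τ := by
  have hpos : ∀ j, ∀ e ∈ G.edgeFinset, 0 < w j e := fun j e he =>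
    flow_pos (a := (w · e)) hs0.le hs1 (hpos0 e he) (fun i => (hbound i e he).2)
      (fun i => hflow i e he) j
  intro j e he
  refine ⟨hpos j e he, one_sub_two_mul_pow_le_flow (a := (w · e)) hs0.le hs1 (hpos0 e he)
    (fun i => (hbound i e he).2) (fun i => hflow i e he) j, ?_⟩
  calc w j e ≤ ∑ τ ∈ G.edgeFinset, w j τ := single_le_sum (fun τ hτ => (hpos j τ hτ).le) he
    _ ≤ (1 + 2 * (m : ℝ) * θ * s) ^ j * ∑ τ ∈ G.edgeFinset, w 0 τ :=
      hm ▸ sum_flow_le hs0.le (by linarith) hpos (fun i e he => (hbound i e he).1) hflow hsurg j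

/-- Theorem 2.3 (ii): bounds for the discrete Ricci curvature flow
`w' = w − s·κ·w` with Lin–Lu–Yau's curvature, under the θ-surgery condition. -/
theorem lly_flow_surgery_bounds {V : Type*} [Fintype V] [DecidableEq V]
    (G : SimpleGraph V) [DecidableRel G.Adj] (hconn : G.Connected)
    (m : ℕ) (hm : G.edgeFinset.card = m)
    (θ : ℝ) (hθ : 1 < θ)
    (s : ℝ) (hs0 : 0 < s) (hs1 : s < 1 / 2)
    (w : ℕ → Sym2 V → ℝ) (κ : ℕ → Sym2 V → ℝ)
    (hpos0 : ∀ e ∈ G.edgeFinset, 0 < w 0 e)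
    -- the Lin–Lu–Yau curvature κ is the limit of κ^α/(1-α) as α → 1⁻, assumed to exist
    (hLLY : ∀ j : ℕ, ∀ e ∈ G.edgeFinset,
      Filter.Tendsto (fun α : ℝ => ollivier G (w j) α e / (1 - α))
        (nhdsWithin 1 (Set.Iio 1)) (nhds (κ j e)))
    -- the curvature bounds −(2/ρ_e)·max_{τ∈E} w_τ ≤ κ_e ≤ 2
    (hbound : ∀ (j : ℕ) (e : Sym2 V) (he : e ∈ G.edgeFinset),
      -(2 / edist G (w j) e) * G.edgeFinset.sup' ⟨e, he⟩ (w j) ≤ κ j e ∧ κ j e ≤ 2)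
    (hflow : ∀ j : ℕ, ∀ e ∈ G.edgeFinset,
      w (j + 1) e = w j e - s * κ j e * w j e)
    -- θ-surgery condition at every step
    (hsurg : ∀ j : ℕ, ∀ e ∈ G.edgeFinset, w j e / edist G (w j) e ≤ θ) :
    ∀ j : ℕ, ∀ e ∈ G.edgeFinset,
      0 < w j e ∧
      (1 - 2 * s) ^ j * w 0 e ≤ w j e ∧
      w j e ≤ (1 + 2 * (m : ℝ) * θ * s) ^ j * ∑ τ ∈ G.edgeFinset, w 0 τ :=
  lly_flow_surgery_bounds_general G m hm θ hθ s hs0 hs1 w κ hpos0 hbound hflow hsurg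
end

section
/- Let G=(V,E) be a finite connected graph with m edges, let w_{0,e}>0 be initial weights, fix θ>1 and a step size s with 0<s<1/(mθ+2). Define iterates by w_e^{(0)}=w_{0,e} and w_e^{(j+1)} = w_e^{(j)} + s·(−κ_e^{(j)} + (∑_{τ∈E} κ_τ^{(j)}·w_τ^{(j)})/(∑_{τ∈E} w_τ^{(j)}))·w_e^{(j)}, where κ_e^{(j)} is Lin–Lu–Yau's Ricci curvature of the edge e computed from the weights w^{(j)} (the defining limits are assumed to exist at every step, and the curvature satisfies −(2/ρ_e)·max_{τ∈E} w_τ ≤ κ_e ≤ 2), and assume that at every step j and every edge e the θ-surgery condition w_e^{(j)}/ρ_e^{(j)} ≤ θ holds, where ρ_e^{(j)} is the distance of the endpoints of e in the weights w^{(j)}. Then every iterate is strictly positive (so the flow has a unique global solution) and for all j∈ℕ and all e∈E: (1−(mθ+2)s)^j·w_{0,e} ≤ w_e^{(j)} ≤ ∑_{τ∈E} w_{0,τ}. -/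
open Finset

namespace RicciAux
open SimpleGraph

variable {V : Type*} {G : SimpleGraph V} {w : Sym2 V → ℝ}

lemma walkWeight_nonneg (hw : ∀ e ∈ G.edgeSet, 0 ≤ w e) {u v : V} (p : G.Walk u v) :
    0 ≤ walkWeight w p := by
  apply List.sum_nonneg
  intro a ha
  obtain ⟨e, he, rfl⟩ := List.mem_map.mp ha
  exact hw e (p.edges_subset_edgeSet he)

lemma walkWeight_append (w : Sym2 V → ℝ) {u v x : V} (p : G.Walk u v) (q : G.Walk v x) :
    walkWeight w (p.append q) = walkWeight w p + walkWeight w q := by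
  simp [walkWeight, SimpleGraph.Walk.edges_append]

lemma walkWeight_cons (w : Sym2 V → ℝ) {u v x : V} (h : G.Adj u v) (p : G.Walk v x) :
    walkWeight w (SimpleGraph.Walk.cons h p) = w s(u, v) + walkWeight w p := by
  simp [walkWeight]

lemma gdist_set_nonempty (hconn : G.Connected) (w : Sym2 V → ℝ) (u v : V) :
    {x : ℝ | ∃ p : G.Walk u v, x = walkWeight w p}.Nonempty := by
  obtain ⟨p⟩ := hconn u v
  exact ⟨walkWeight w p, p, rfl⟩

lemma gdist_bddBelow (hw : ∀ e ∈ G.edgeSet, 0 ≤ w e) (u v : V) :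
    BddBelow {x : ℝ | ∃ p : G.Walk u v, x = walkWeight w p} := by
  refine ⟨0, fun x hx => ?_⟩
  obtain ⟨p, rfl⟩ := hx
  exact walkWeight_nonneg hw p

lemma gdist_nonneg (hconn : G.Connected) (hw : ∀ e ∈ G.edgeSet, 0 ≤ w e) (u v : V) :
    0 ≤ gdist G w u v :=
  le_csInf (gdist_set_nonempty hconn w u v) (fun x hx => by
    obtain ⟨p, rfl⟩ := hx; exact walkWeight_nonneg hw p)

lemma gdist_le_walkWeight (hw : ∀ e ∈ G.edgeSet, 0 ≤ w e) {u v : V} (p : G.Walk u v) :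
    gdist G w u v ≤ walkWeight w p :=
  csInf_le (gdist_bddBelow hw u v) ⟨p, rfl⟩

lemma gdist_self (hconn : G.Connected) (hw : ∀ e ∈ G.edgeSet, 0 ≤ w e) (u : V) :
    gdist G w u u = 0 := by
  refine le_antisymm ?_ (gdist_nonneg hconn hw u u)
  have := gdist_le_walkWeight (G := G) hw (SimpleGraph.Walk.nil' u)
  simpa [walkWeight] using this

lemma gdist_le_edge (hw : ∀ e ∈ G.edgeSet, 0 ≤ w e) {u v : V} (h : G.Adj u v) :
    gdist G w u v ≤ w s(u, v) := by
  have := gdist_le_walkWeight (G := G) hw (SimpleGraph.Walk.cons h (SimpleGraph.Walk.nil' v))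
  simpa [walkWeight] using this

lemma gdist_triangle (hconn : G.Connected) (hw : ∀ e ∈ G.edgeSet, 0 ≤ w e) (u y v : V) :
    gdist G w u v ≤ gdist G w u y + gdist G w y v := by
  have key : ∀ a ∈ {x : ℝ | ∃ p : G.Walk u y, x = walkWeight w p},
      ∀ b ∈ {x : ℝ | ∃ p : G.Walk y v, x = walkWeight w p}, gdist G w u v ≤ a + b := by
    rintro a ⟨p, rfl⟩ b ⟨q, rfl⟩
    rw [← walkWeight_append w p q]
    exact gdist_le_walkWeight hw _
  have h1 : gdist G w u v - gdist G w y v ≤ gdist G w u y := by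
    apply le_csInf (gdist_set_nonempty hconn w u y)
    intro a ha
    have h2 : gdist G w u v - a ≤ gdist G w y v := by
      apply le_csInf (gdist_set_nonempty hconn w y v)
      intro b hb
      linarith [key a ha b hb]
    linarith
  linarith

lemma gdist_neighbor_le (hconn : G.Connected) (hw : ∀ e ∈ G.edgeSet, 0 ≤ w e) {x z : V}
    (h : G.Adj x z) (y : V) : gdist G w z y ≤ w s(x, z) + gdist G w x y := by
  have h1 : gdist G w z x ≤ w s(x, z) := by
    have := gdist_le_edge hw h.symm
    rwa [Sym2.eq_swap] at this
  calc gdist G w z y ≤ gdist G w z x + gdist G w x y := gdist_triangle hconn hw z x y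
    _ ≤ w s(x, z) + gdist G w x y := by linarith

lemma gdist_pos [Fintype V] [DecidableEq V] [DecidableRel G.Adj]
    (hw : ∀ e ∈ G.edgeFinset, 0 < w e) {x y : V} (h : G.Adj x y) :
    0 < gdist G w x y := by
  have hne : G.edgeFinset.Nonempty := ⟨s(x, y), by rw [mem_edgeFinset]; exact h⟩
  set c := G.edgeFinset.inf' hne w with hc
  have hcpos : 0 < c := (Finset.lt_inf'_iff hne).mpr fun i hi => hw i hi
  have hle : ∀ t ∈ {t : ℝ | ∃ p : G.Walk x y, t = walkWeight w p}, c ≤ t := by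
    rintro t ⟨p, rfl⟩
    cases p with
    | nil => first | exact absurd rfl h.ne | exact absurd rfl h.ne'
    | cons hadj q =>
        rw [walkWeight_cons]
        have h1 : c ≤ w s(x, _) := Finset.inf'_le w (by rw [mem_edgeFinset]; exact hadj)
        have h2 : 0 ≤ walkWeight w q :=
          walkWeight_nonneg (fun e he => (hw e (mem_edgeFinset.mpr he)).le) q
        linarith
  have : c ≤ gdist G w x y := le_csInf ⟨walkWeight w (SimpleGraph.Walk.cons h .nil), _, rfl⟩ hle
  linarith

variable [Fintype V] [DecidableEq V] [DecidableRel G.Adj]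

lemma wdeg_pos (hw : ∀ e ∈ G.edgeFinset, 0 < w e) {x : V} (hx : (G.neighborFinset x).Nonempty) :
    0 < ∑ u ∈ G.neighborFinset x, w s(x, u) := by
  apply Finset.sum_pos _ hx
  intro z hz
  exact hw _ (mem_edgeFinset.mpr ((mem_neighborFinset G x z).mp hz))

lemma sum_lazy_mul (w : Sym2 V → ℝ) (α : ℝ) (x : V) (g : V → ℝ) :
    ∑ u, lazyWalk G w α x u * g u =
      α * g x + ∑ z ∈ G.neighborFinset x,
        ((1 - α) * w s(x, z) / ∑ u ∈ G.neighborFinset x, w s(x, u)) * g z := by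
  rw [← Finset.add_sum_erase _ _ (Finset.mem_univ x)]
  congr 1
  · simp [lazyWalk]
  · have hfe : (Finset.univ.erase x).filter (G.Adj x) = G.neighborFinset x := by
      ext u
      simp only [Finset.mem_filter, Finset.mem_erase, Finset.mem_univ, and_true, true_and,
        mem_neighborFinset]
      exact ⟨fun h => h.2, fun h => ⟨h.ne', h⟩⟩
    have hcongr : ∀ u ∈ Finset.univ.erase x, lazyWalk G w α x u * g u =
        if G.Adj x u then ((1 - α) * w s(x, u) / ∑ u ∈ G.neighborFinset x, w s(x, u)) * g u
        else 0 := by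
      intro u hu
      have hux : u ≠ x := (Finset.mem_erase.mp hu).1
      simp only [lazyWalk, if_neg hux]
      split <;> simp
    rw [Finset.sum_congr rfl hcongr, ← Finset.sum_filter, hfe]

lemma sum_lazy_coeff (hw : ∀ e ∈ G.edgeFinset, 0 < w e) (α : ℝ) {x : V}
    (hx : (G.neighborFinset x).Nonempty) :
    ∑ z ∈ G.neighborFinset x,
      (1 - α) * w s(x, z) / ∑ u ∈ G.neighborFinset x, w s(x, u) = 1 - α := by
  have h2 : ∑ z ∈ G.neighborFinset x,
      (1 - α) * w s(x, z) / ∑ u ∈ G.neighborFinset x, w s(x, u)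
      = (1 - α) * (∑ z ∈ G.neighborFinset x, w s(x, z))
          / ∑ u ∈ G.neighborFinset x, w s(x, u) := by
    rw [Finset.mul_sum, Finset.sum_div]
  rw [h2, mul_div_assoc, div_self (wdeg_pos hw hx).ne', mul_one]

lemma sum_lazy (hw : ∀ e ∈ G.edgeFinset, 0 < w e) (α : ℝ) (x : V)
    (hx : (G.neighborFinset x).Nonempty) :
    ∑ u, lazyWalk G w α x u = 1 := by
  have h := sum_lazy_mul (G := G) w α x (fun _ => (1 : ℝ))
  simp only [mul_one] at h
  rw [h, sum_lazy_coeff hw α hx]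
  ring

lemma lazy_nonneg (hw : ∀ e ∈ G.edgeFinset, 0 < w e) {α : ℝ} (hα0 : 0 ≤ α) (hα1 : α ≤ 1)
    (x u : V) : 0 ≤ lazyWalk G w α x u := by
  unfold lazyWalk
  split_ifs with h1 h2
  · exact hα0
  · have hwp := hw s(x, u) (mem_edgeFinset.mpr h2)
    have hD := wdeg_pos hw ⟨u, (mem_neighborFinset G x u).mpr h2⟩
    have h1a : (0:ℝ) ≤ 1 - α := by linarith
    positivity
  · exact le_refl 0

lemma lazy_le_one (hw : ∀ e ∈ G.edgeFinset, 0 < w e) {α : ℝ} (hα0 : 0 ≤ α) (hα1 : α ≤ 1)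
    (x u : V) : lazyWalk G w α x u ≤ 1 := by
  unfold lazyWalk
  split_ifs with h1 h2
  · exact hα1
  · have hmem : u ∈ G.neighborFinset x := (mem_neighborFinset G x u).mpr h2
    have hle : w s(x, u) ≤ ∑ z ∈ G.neighborFinset x, w s(x, z) :=
      Finset.single_le_sum (f := fun z => w s(x, z))
        (fun z hz => (hw _ (mem_edgeFinset.mpr ((mem_neighborFinset G x z).mp hz))).le) hmem
    have hpos : 0 < ∑ u ∈ G.neighborFinset x, w s(x, u) := wdeg_pos hw ⟨u, hmem⟩
    rw [div_le_one hpos]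
    calc (1 - α) * w s(x, u) ≤ 1 * w s(x, u) :=
          mul_le_mul_of_nonneg_right (by linarith) (hw _ (mem_edgeFinset.mpr h2)).le
      _ = w s(x, u) := one_mul _
      _ ≤ _ := hle
  · exact zero_le_one

lemma lazy_coeff_nonneg (hw : ∀ e ∈ G.edgeFinset, 0 < w e) {α : ℝ} (hα1 : α ≤ 1)
    {x z : V} (hz : z ∈ G.neighborFinset x) :
    0 ≤ (1 - α) * w s(x, z) / ∑ u ∈ G.neighborFinset x, w s(x, u) := by
  have hwp := (hw s(x, z) (mem_edgeFinset.mpr ((mem_neighborFinset G x z).mp hz))).le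
  have hD := (wdeg_pos hw ⟨z, hz⟩).le
  have h1a : (0:ℝ) ≤ 1 - α := by linarith
  positivity

lemma lazy_coeff_le (hw : ∀ e ∈ G.edgeFinset, 0 < w e) {α : ℝ} (hα1 : α ≤ 1)
    {x z : V} (hz : z ∈ G.neighborFinset x) :
    (1 - α) * w s(x, z) / ∑ u ∈ G.neighborFinset x, w s(x, u) ≤ 1 - α := by
  have hD := wdeg_pos hw ⟨z, hz⟩
  rw [div_le_iff₀ hD]
  have hle : w s(x, z) ≤ ∑ u ∈ G.neighborFinset x, w s(x, u) :=
    Finset.single_le_sum (f := fun u => w s(x, u))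
      (fun u hu => (hw _ (mem_edgeFinset.mpr ((mem_neighborFinset G x u).mp hu))).le) hz
  have h1a : (0:ℝ) ≤ 1 - α := by linarith
  calc (1 - α) * w s(x, z) ≤ (1 - α) * ∑ u ∈ G.neighborFinset x, w s(x, u) :=
        mul_le_mul_of_nonneg_left hle h1a
    _ = (1 - α) * ∑ u ∈ G.neighborFinset x, w s(x, u) := rfl

/-- The weighted degrees of the two endpoints of an edge, minus the edge weight,
are at most the total weight. -/
lemma incidence_sum_le (hw : ∀ e ∈ G.edgeFinset, 0 < w e) {x y : V} (h : G.Adj x y) :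
    (∑ z ∈ G.neighborFinset x, w s(x, z)) + (∑ z ∈ G.neighborFinset y, w s(y, z))
      - w s(x, y) ≤ ∑ τ ∈ G.edgeFinset, w τ := by
  classical
  set A := (G.neighborFinset x).image (fun z => s(x, z)) with hA
  set B := (G.neighborFinset y).image (fun z => s(y, z)) with hB
  have hsumA : ∑ τ ∈ A, w τ = ∑ z ∈ G.neighborFinset x, w s(x, z) :=
    Finset.sum_image (fun a _ b _ hab => Sym2.congr_right.mp hab)
  have hsumB : ∑ τ ∈ B, w τ = ∑ z ∈ G.neighborFinset y, w s(y, z) :=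
    Finset.sum_image (fun a _ b _ hab => Sym2.congr_right.mp hab)
  have hAB : A ∩ B = {s(x, y)} := by
    ext τ
    simp only [Finset.mem_inter, Finset.mem_image, mem_neighborFinset, Finset.mem_singleton, hA, hB]
    constructor
    · rintro ⟨⟨a, ha, rfl⟩, ⟨b, hb, hab⟩⟩
      rcases Sym2.eq_iff.mp hab.symm with ⟨h1, h2⟩ | ⟨h1, h2⟩
      · exact absurd h1 h.ne
      · rw [h2]
    · rintro rfl
      exact ⟨⟨y, h, rfl⟩, ⟨x, h.symm, Sym2.eq_swap⟩⟩
  have hsub : A ∪ B ⊆ G.edgeFinset := by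
    intro τ hτ
    rcases Finset.mem_union.mp hτ with hτ | hτ <;>
      · obtain ⟨a, ha, rfl⟩ := Finset.mem_image.mp hτ
        rw [mem_edgeFinset]
        exact (mem_neighborFinset _ _ _).mp ha
  have hui : ∑ τ ∈ A ∪ B, w τ + ∑ τ ∈ A ∩ B, w τ = ∑ τ ∈ A, w τ + ∑ τ ∈ B, w τ :=
    Finset.sum_union_inter
  have hle : ∑ τ ∈ A ∪ B, w τ ≤ ∑ τ ∈ G.edgeFinset, w τ :=
    Finset.sum_le_sum_of_subset_of_nonneg hsub (fun τ hτ _ => (hw τ hτ).le)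
  rw [hAB, Finset.sum_singleton] at hui
  linarith [hsumA, hsumB]

/-- Key estimate: the Lin-Lu-Yau curvature is bounded below by
`-(Dx + Dy - w e) / ρ_e`. -/
lemma kappa_lower (hconn : G.Connected)
    (hw : ∀ e ∈ G.edgeFinset, 0 < w e) {e : Sym2 V} (he : e ∈ G.edgeFinset) {κe : ℝ}
    (hLLY : Filter.Tendsto (fun α : ℝ => ollivier G w α e / (1 - α))
      (nhdsWithin 1 (Set.Iio 1)) (nhds κe)) :
    -(((∑ z ∈ G.neighborFinset (endpoints e).1, w s((endpoints e).1, z)) +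
        (∑ z ∈ G.neighborFinset (endpoints e).2, w s((endpoints e).2, z)) - w e) /
      edist G w e) ≤ κe := by
  classical
  set x := (endpoints e).1 with hx
  set y := (endpoints e).2 with hy
  have hsxy : s(x, y) = e := by
    rw [hx, hy]
    show s((Quot.out e).1, (Quot.out e).2) = e
    exact Quot.out_eq e
  have hadj : G.Adj x y := by
    rw [← SimpleGraph.mem_edgeSet, hsxy]
    exact mem_edgeFinset.mp he
  have hw0 : ∀ τ ∈ G.edgeSet, 0 ≤ w τ := fun τ hτ => (hw τ (mem_edgeFinset.mpr hτ)).le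
  have hNx : (G.neighborFinset x).Nonempty := ⟨y, (mem_neighborFinset G x y).mpr hadj⟩
  have hNy : (G.neighborFinset y).Nonempty := ⟨x, (mem_neighborFinset G y x).mpr hadj.symm⟩
  set Dx := ∑ z ∈ G.neighborFinset x, w s(x, z) with hDx
  set Dy := ∑ z ∈ G.neighborFinset y, w s(y, z) with hDy
  set ρ := edist G w e with hρ
  have hρg : ρ = gdist G w x y := rfl
  have hρpos : 0 < ρ := by rw [hρg]; exact gdist_pos hw hadj
  set C := Dx + Dy - w e with hC
  have hwe : 0 < w e := hw e he
  have hDxwe : w e ≤ Dx := by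
    rw [← hsxy]
    exact Finset.single_le_sum (f := fun z => w s(x, z))
      (fun z hz => (hw _ (mem_edgeFinset.mpr ((mem_neighborFinset G x z).mp hz))).le)
      ((mem_neighborFinset G x y).mpr hadj)
  have hDywe : w e ≤ Dy := by
    have : w s(y, x) = w e := by rw [Sym2.eq_swap, hsxy]
    rw [← this]
    exact Finset.single_le_sum (f := fun z => w s(y, z))
      (fun z hz => (hw _ (mem_edgeFinset.mpr ((mem_neighborFinset G y z).mp hz))).le)
      ((mem_neighborFinset G y x).mpr hadj.symm)
  have hC0 : 0 ≤ C := by rw [hC]; linarith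
  -- the pointwise estimate for α ∈ (0,1)
  have hev : ∀ᶠ α in nhdsWithin (1:ℝ) (Set.Iio 1), -(C / ρ) ≤ ollivier G w α e / (1 - α) := by
    have hmem : Set.Ioo (0:ℝ) 1 ∈ nhdsWithin (1:ℝ) (Set.Iio 1) := by
      rw [mem_nhdsWithin]
      exact ⟨Set.Ioi 0, isOpen_Ioi, by norm_num, fun t ht => ⟨ht.1, ht.2⟩⟩
    filter_upwards [hmem] with α hα
    obtain ⟨hα0, hα1⟩ := hα
    have h1α : 0 < 1 - α := by linarith
    set μx := lazyWalk G w α x with hμx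
    set μy := lazyWalk G w α y with hμy
    have hsx : ∑ u, μx u = 1 := sum_lazy hw α x hNx
    have hsy : ∑ u, μy u = 1 := sum_lazy hw α y hNy
    set A : V → V → ℝ := fun u v => μx u * μy v with hAdef
    have hA : IsCoupling μx μy A := by
      refine ⟨fun u v => ⟨mul_nonneg (lazy_nonneg hw hα0.le hα1.le x u)
          (lazy_nonneg hw hα0.le hα1.le y v), ?_⟩, fun u => ?_, fun v => ?_⟩
      · exact mul_le_one₀ (lazy_le_one hw hα0.le hα1.le x u)
          (lazy_nonneg hw hα0.le hα1.le y v) (lazy_le_one hw hα0.le hα1.le y v)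
      · rw [show ∑ v, A u v = μx u * ∑ v, μy v by rw [Finset.mul_sum], hsy, mul_one]
      · rw [show ∑ u, A u v = (∑ u, μx u) * μy v by rw [Finset.sum_mul], hsx, one_mul]
    have hbdd : BddBelow {t : ℝ | ∃ B : V → V → ℝ, IsCoupling μx μy B ∧
        t = ∑ u, ∑ v, B u v * gdist G w u v} := by
      refine ⟨0, ?_⟩
      rintro t ⟨B, hB, rfl⟩
      apply Finset.sum_nonneg
      intro u _
      apply Finset.sum_nonneg
      intro v _
      exact mul_nonneg (hB.1 u v).1 (gdist_nonneg hconn hw0 u v)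
    have hwass : wasserstein G w μx μy ≤ ∑ u, ∑ v, A u v * gdist G w u v :=
      csInf_le hbdd ⟨A, hA, rfl⟩
    -- bound the cost of the product coupling
    have tri : ∀ u v, gdist G w u v ≤ gdist G w u y + gdist G w y v :=
      fun u v => gdist_triangle hconn hw0 u y v
    set E1 := ∑ u, μx u * gdist G w u y with hE1
    set E2 := ∑ v, μy v * gdist G w y v with hE2
    have hcost : ∑ u, ∑ v, A u v * gdist G w u v ≤ E1 + E2 := by
      have step1 : ∑ u, ∑ v, A u v * gdist G w u v ≤
          ∑ u, ∑ v, A u v * (gdist G w u y + gdist G w y v) := by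
        apply Finset.sum_le_sum
        intro u _
        apply Finset.sum_le_sum
        intro v _
        exact mul_le_mul_of_nonneg_left (tri u v) (hA.1 u v).1
      have step2 : ∑ u, ∑ v, A u v * (gdist G w u y + gdist G w y v) = E1 + E2 := by
        have inner : ∀ u : V, ∑ v, A u v * (gdist G w u y + gdist G w y v)
            = μx u * gdist G w u y + μx u * E2 := by
          intro u
          have e1 : ∑ v, A u v * (gdist G w u y + gdist G w y v)
              = ∑ v, ((μx u * gdist G w u y) * μy v + μx u * (μy v * gdist G w y v)) := by
            apply Finset.sum_congr rfl
            intro v _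
            simp only [hAdef]
            ring
          rw [e1, Finset.sum_add_distrib, ← Finset.mul_sum, ← Finset.mul_sum, hsy, mul_one]
        rw [Finset.sum_congr rfl (fun u _ => inner u), Finset.sum_add_distrib,
          ← Finset.sum_mul, hsx, one_mul]
      linarith [step1, step2.le, step2.ge]
    -- bound E1
    have hE1b : E1 ≤ ρ + (1 - α) * (Dx - w e) := by
      rw [hE1, sum_lazy_mul w α x (fun u => gdist G w u y)]
      have hyN : y ∈ G.neighborFinset x := (mem_neighborFinset G x y).mpr hadj
      rw [← Finset.add_sum_erase _ _ hyN]
      have hyy : gdist G w y y = 0 := gdist_self hconn hw0 y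
      have hterm : ∀ z ∈ (G.neighborFinset x).erase y,
          ((1 - α) * w s(x, z) / Dx) * gdist G w z y ≤
            (1 - α) * w s(x, z) + ((1 - α) * w s(x, z) / Dx) * ρ := by
        intro z hz
        have hzN : z ∈ G.neighborFinset x := Finset.mem_of_mem_erase hz
        have hadjz : G.Adj x z := (mem_neighborFinset G x z).mp hzN
        have hcn : 0 ≤ (1 - α) * w s(x, z) / Dx := lazy_coeff_nonneg hw hα1.le hzN
        have hcl : (1 - α) * w s(x, z) / Dx ≤ 1 - α := lazy_coeff_le hw hα1.le hzN
        have hdz : gdist G w z y ≤ w s(x, z) + ρ := by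
          rw [hρg]
          exact gdist_neighbor_le hconn hw0 hadjz y
        have hwz : 0 ≤ w s(x, z) := (hw _ (mem_edgeFinset.mpr hadjz)).le
        calc ((1 - α) * w s(x, z) / Dx) * gdist G w z y
            ≤ ((1 - α) * w s(x, z) / Dx) * (w s(x, z) + ρ) := by
              apply mul_le_mul_of_nonneg_left hdz hcn
          _ = ((1 - α) * w s(x, z) / Dx) * w s(x, z) + ((1 - α) * w s(x, z) / Dx) * ρ := by ring
          _ ≤ (1 - α) * w s(x, z) + ((1 - α) * w s(x, z) / Dx) * ρ := by
              have := mul_le_mul_of_nonneg_right hcl hwz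
              linarith
      have hsum1 : ∑ z ∈ (G.neighborFinset x).erase y,
          ((1 - α) * w s(x, z) / Dx) * gdist G w z y ≤
          ∑ z ∈ (G.neighborFinset x).erase y,
            ((1 - α) * w s(x, z) + ((1 - α) * w s(x, z) / Dx) * ρ) :=
        Finset.sum_le_sum hterm
      have hsum2 : ∑ z ∈ (G.neighborFinset x).erase y, (1 - α) * w s(x, z)
          = (1 - α) * (Dx - w e) := by
        rw [← Finset.mul_sum, Finset.sum_erase_eq_sub hyN, hDx, hsxy]
      have hsum3 : ∑ z ∈ (G.neighborFinset x).erase y,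
          ((1 - α) * w s(x, z) / Dx) * ρ ≤ (1 - α) * ρ := by
        rw [← Finset.sum_mul]
        have hss : ∑ z ∈ (G.neighborFinset x).erase y, (1 - α) * w s(x, z) / Dx
            ≤ ∑ z ∈ G.neighborFinset x, (1 - α) * w s(x, z) / Dx :=
          Finset.sum_le_sum_of_subset_of_nonneg (Finset.erase_subset _ _)
            (fun z hz _ => lazy_coeff_nonneg hw hα1.le hz)
        rw [sum_lazy_coeff hw α hNx] at hss
        exact mul_le_mul_of_nonneg_right hss hρpos.le
      have hcy : 0 ≤ (1 - α) * w s(x, y) / Dx := lazy_coeff_nonneg hw hα1.le hyN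
      have hdxy : gdist G w x y = ρ := hρg.symm
      rw [Finset.sum_add_distrib] at hsum1
      have hαρ : α * gdist G w x y = α * ρ := by rw [hdxy]
      rw [hαρ, hyy, mul_zero, zero_add]
      have : α * ρ + ∑ z ∈ (G.neighborFinset x).erase y,
          ((1 - α) * w s(x, z) / Dx) * gdist G w z y
          ≤ α * ρ + ((1 - α) * (Dx - w e) + (1 - α) * ρ) := by
        have h5 := hsum1.trans (add_le_add (le_of_eq hsum2) hsum3)
        linarith
      calc α * ρ + ∑ z ∈ (G.neighborFinset x).erase y,
            ((1 - α) * w s(x, z) / Dx) * gdist G w z y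
          ≤ α * ρ + ((1 - α) * (Dx - w e) + (1 - α) * ρ) := this
        _ = ρ + (1 - α) * (Dx - w e) := by ring
    -- bound E2
    have hE2b : E2 ≤ (1 - α) * Dy := by
      rw [hE2, sum_lazy_mul w α y (fun v => gdist G w y v)]
      have hyy : gdist G w y y = 0 := gdist_self hconn hw0 y
      rw [hyy, mul_zero, zero_add]
      have hterm : ∀ z ∈ G.neighborFinset y,
          ((1 - α) * w s(y, z) / Dy) * gdist G w y z ≤ (1 - α) * w s(y, z) := by
        intro z hz
        have hadjz : G.Adj y z := (mem_neighborFinset G y z).mp hz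
        have hcn : 0 ≤ (1 - α) * w s(y, z) / Dy := lazy_coeff_nonneg hw hα1.le hz
        have hcl : (1 - α) * w s(y, z) / Dy ≤ 1 - α := lazy_coeff_le hw hα1.le hz
        have hdz : gdist G w y z ≤ w s(y, z) := gdist_le_edge hw0 hadjz
        have hwz : 0 ≤ w s(y, z) := (hw _ (mem_edgeFinset.mpr hadjz)).le
        calc ((1 - α) * w s(y, z) / Dy) * gdist G w y z
            ≤ ((1 - α) * w s(y, z) / Dy) * w s(y, z) := mul_le_mul_of_nonneg_left hdz hcn
          _ ≤ (1 - α) * w s(y, z) := mul_le_mul_of_nonneg_right hcl hwz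
      calc ∑ z ∈ G.neighborFinset y, ((1 - α) * w s(y, z) / Dy) * gdist G w y z
          ≤ ∑ z ∈ G.neighborFinset y, (1 - α) * w s(y, z) := Finset.sum_le_sum hterm
        _ = (1 - α) * Dy := by rw [← Finset.mul_sum]
    have hwass2 : wasserstein G w μx μy ≤ ρ + (1 - α) * C := by
      have hCexp : ρ + (1 - α) * C = (ρ + (1 - α) * (Dx - w e)) + (1 - α) * Dy := by
        rw [hC]; ring
      exact hwass.trans (hcost.trans (by linarith : E1 + E2 ≤ ρ + (1 - α) * C))
    -- conclude
    have holl : ollivier G w α e = 1 - wasserstein G w μx μy / ρ := rfl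
    rw [le_div_iff₀ h1α]
    rw [holl]
    have hdiv : wasserstein G w μx μy / ρ ≤ 1 + (1 - α) * C / ρ := by
      rw [div_le_iff₀ hρpos]
      calc wasserstein G w μx μy ≤ ρ + (1 - α) * C := hwass2
        _ = (1 + (1 - α) * C / ρ) * ρ := by field_simp
    have : -(C / ρ) * (1 - α) = -((1 - α) * C / ρ) := by ring
    rw [this]
    linarith
  exact ge_of_tendsto hLLY hev

/-- Per-edge estimate used in the flow: `κ_e w_e ≥ -θ ∑ w`. -/
lemma kappa_wsum (hconn : G.Connected)
    (hw : ∀ e ∈ G.edgeFinset, 0 < w e) {e : Sym2 V} (he : e ∈ G.edgeFinset) {κe θ : ℝ}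
    (hθ0 : 0 ≤ θ) (hsurg : w e / edist G w e ≤ θ)
    (hLLY : Filter.Tendsto (fun α : ℝ => ollivier G w α e / (1 - α))
      (nhdsWithin 1 (Set.Iio 1)) (nhds κe)) :
    -θ * (∑ τ ∈ G.edgeFinset, w τ) ≤ κe * w e := by
  classical
  set x := (endpoints e).1 with hx
  set y := (endpoints e).2 with hy
  have hsxy : s(x, y) = e := by
    rw [hx, hy]
    show s((Quot.out e).1, (Quot.out e).2) = e
    exact Quot.out_eq e
  have hadj : G.Adj x y := by
    rw [← SimpleGraph.mem_edgeSet, hsxy]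
    exact mem_edgeFinset.mp he
  set Dx := ∑ z ∈ G.neighborFinset x, w s(x, z) with hDx
  set Dy := ∑ z ∈ G.neighborFinset y, w s(y, z) with hDy
  set ρ := edist G w e with hρ
  have hρpos : 0 < ρ := gdist_pos hw hadj
  set C := Dx + Dy - w e with hC
  have hκ : -(C / ρ) ≤ κe := kappa_lower hconn hw he hLLY
  have hwe : 0 < w e := hw e he
  have hCW : C ≤ ∑ τ ∈ G.edgeFinset, w τ := by
    have := incidence_sum_le hw hadj
    rw [hsxy] at this
    exact this
  have hDxwe : w e ≤ Dx := by
    rw [← hsxy]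
    exact Finset.single_le_sum (f := fun z => w s(x, z))
      (fun z hz => (hw _ (mem_edgeFinset.mpr ((mem_neighborFinset G x z).mp hz))).le)
      ((mem_neighborFinset G x y).mpr hadj)
  have hDywe : w e ≤ Dy := by
    have h2 : w s(y, x) = w e := by rw [Sym2.eq_swap, hsxy]
    rw [← h2]
    exact Finset.single_le_sum (f := fun z => w s(y, z))
      (fun z hz => (hw _ (mem_edgeFinset.mpr ((mem_neighborFinset G y z).mp hz))).le)
      ((mem_neighborFinset G y x).mpr hadj.symm)
  have hC0 : 0 ≤ C := by rw [hC]; linarith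
  have hweθ : w e ≤ θ * ρ := by
    rw [div_le_iff₀ hρpos] at hsurg
    exact hsurg
  have hCρ : -C ≤ κe * ρ := by
    have := mul_le_mul_of_nonneg_right hκ hρpos.le
    calc -C = -(C / ρ) * ρ := by field_simp
      _ ≤ κe * ρ := this
  have hWt : 0 ≤ ∑ τ ∈ G.edgeFinset, w τ := le_trans hC0 hCW
  rcases le_or_gt 0 κe with hκ0 | hκ0
  · have : 0 ≤ κe * w e := mul_nonneg hκ0 hwe.le
    nlinarith
  · have h1 : κe * w e ≥ κe * (θ * ρ) := by
      apply mul_le_mul_of_nonpos_left hweθ hκ0.le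
    have h2 : κe * (θ * ρ) = θ * (κe * ρ) := by ring
    have h3 : θ * (κe * ρ) ≥ θ * (-C) := mul_le_mul_of_nonneg_left hCρ hθ0
    have h4 : θ * (-C) ≥ θ * (-(∑ τ ∈ G.edgeFinset, w τ)) := by
      apply mul_le_mul_of_nonneg_left _ hθ0
      linarith
    nlinarith
  done

end RicciAux

/-- Theorem 2.4 (ii): bounds for the discrete normalized Ricci curvature flow with
Lin–Lu–Yau's curvature, under the θ-surgery condition. -/
theorem lly_normalized_flow_surgery_bounds {V : Type*} [Fintype V] [DecidableEq V]
    (G : SimpleGraph V) [DecidableRel G.Adj] (hconn : G.Connected)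
    (m : ℕ) (hm : G.edgeFinset.card = m)
    (θ : ℝ) (hθ : 1 < θ)
    (s : ℝ) (hs0 : 0 < s) (hs1 : s < 1 / ((m : ℝ) * θ + 2))
    (w : ℕ → Sym2 V → ℝ) (κ : ℕ → Sym2 V → ℝ)
    (hpos0 : ∀ e ∈ G.edgeFinset, 0 < w 0 e)
    -- the Lin–Lu–Yau curvature κ is the limit of κ^α/(1-α) as α → 1⁻, assumed to exist
    (hLLY : ∀ j : ℕ, ∀ e ∈ G.edgeFinset,
      Filter.Tendsto (fun α : ℝ => ollivier G (w j) α e / (1 - α))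
        (nhdsWithin 1 (Set.Iio 1)) (nhds (κ j e)))
    -- the curvature bounds −(2/ρ_e)·max_{τ∈E} w_τ ≤ κ_e ≤ 2
    (hbound : ∀ (j : ℕ) (e : Sym2 V) (he : e ∈ G.edgeFinset),
      -(2 / edist G (w j) e) * G.edgeFinset.sup' ⟨e, he⟩ (w j) ≤ κ j e ∧ κ j e ≤ 2)
    (hflow : ∀ j : ℕ, ∀ e ∈ G.edgeFinset,
      w (j + 1) e = w j e +
        s * (-(κ j e) +
          (∑ τ ∈ G.edgeFinset, κ j τ * w j τ) /
            (∑ τ ∈ G.edgeFinset, w j τ)) * w j e)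
    -- θ-surgery condition at every step
    (hsurg : ∀ j : ℕ, ∀ e ∈ G.edgeFinset, w j e / edist G (w j) e ≤ θ) :
    ∀ j : ℕ, ∀ e ∈ G.edgeFinset,
      0 < w j e ∧
      (1 - ((m : ℝ) * θ + 2) * s) ^ j * w 0 e ≤ w j e ∧
      w j e ≤ ∑ τ ∈ G.edgeFinset, w 0 τ := by
  classical
  have hθ0 : (0:ℝ) ≤ θ := by linarith
  have hmθ2 : (0:ℝ) < (m : ℝ) * θ + 2 := by
    have : (0:ℝ) ≤ (m : ℝ) * θ := mul_nonneg (Nat.cast_nonneg m) hθ0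
    linarith
  have hcs : ((m : ℝ) * θ + 2) * s < 1 := by
    rw [lt_div_iff₀ hmθ2] at hs1
    linarith
  have hfac : (0:ℝ) < 1 - ((m : ℝ) * θ + 2) * s := by linarith
  have main : ∀ j : ℕ, (∀ e ∈ G.edgeFinset, 0 < w j e) ∧
      (∑ τ ∈ G.edgeFinset, w j τ = ∑ τ ∈ G.edgeFinset, w 0 τ) ∧
      (∀ e ∈ G.edgeFinset, (1 - ((m : ℝ) * θ + 2) * s) ^ j * w 0 e ≤ w j e) := by
    intro j
    induction j with
    | zero =>
      exact ⟨hpos0, rfl, fun e _ => le_of_eq (by rw [pow_zero, one_mul])⟩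
    | succ j ih =>
      obtain ⟨hpos, hsum, hlow⟩ := ih
      rcases G.edgeFinset.eq_empty_or_nonempty with hE | hE
      · refine ⟨fun e he => ?_, by rw [hE]; simp, fun e he => ?_⟩ <;>
          · rw [hE] at he; exact absurd he (Finset.notMem_empty e)
      · set W := ∑ τ ∈ G.edgeFinset, w j τ with hW
        set S := ∑ τ ∈ G.edgeFinset, κ j τ * w j τ with hS
        have hWpos : 0 < W := Finset.sum_pos hpos hE
        have hedge : ∀ τ ∈ G.edgeFinset, -θ * W ≤ κ j τ * w j τ := fun τ hτ =>
          RicciAux.kappa_wsum hconn hpos hτ hθ0 (hsurg j τ hτ) (hLLY j τ hτ)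
        have hSsum : -((m : ℝ) * θ) * W ≤ S := by
          have h1 : G.edgeFinset.card • (-θ * W) ≤ S :=
            Finset.card_nsmul_le_sum _ _ _ hedge
          rw [hm, nsmul_eq_mul] at h1
          calc -((m : ℝ) * θ) * W = (m : ℝ) * (-θ * W) := by ring
            _ ≤ S := h1
        have hfactor : ∀ e ∈ G.edgeFinset,
            1 - ((m : ℝ) * θ + 2) * s ≤ 1 + s * (-(κ j e) + S / W) := by
          intro e he
          have hκ2 : κ j e ≤ 2 := (hbound j e he).2
          have hSW : -((m : ℝ) * θ) ≤ S / W := by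
            rw [le_div_iff₀ hWpos]
            linarith
          have h2 : -((m : ℝ) * θ + 2) ≤ -(κ j e) + S / W := by linarith
          have h3 := mul_le_mul_of_nonneg_left h2 hs0.le
          linarith
        have hflow' : ∀ e ∈ G.edgeFinset,
            w (j + 1) e = (1 + s * (-(κ j e) + S / W)) * w j e := by
          intro e he
          rw [hflow j e he]
          ring
        have hpos' : ∀ e ∈ G.edgeFinset, 0 < w (j + 1) e := by
          intro e he
          rw [hflow' e he]
          exact mul_pos (lt_of_lt_of_le hfac (hfactor e he)) (hpos e he)
        refine ⟨hpos', ?_, ?_⟩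
        · have e1 : ∑ τ ∈ G.edgeFinset, w (j + 1) τ
              = ∑ τ ∈ G.edgeFinset, (w j τ + s * (-(κ j τ) + S / W) * w j τ) :=
            Finset.sum_congr rfl (fun τ hτ => hflow j τ hτ)
          have e3 : ∑ τ ∈ G.edgeFinset, s * (-(κ j τ) + S / W) * w j τ
              = s * ∑ τ ∈ G.edgeFinset, (-(κ j τ * w j τ) + (S / W) * w j τ) := by
            rw [Finset.mul_sum]
            exact Finset.sum_congr rfl (fun τ _ => by ring)
          have e2 : ∑ τ ∈ G.edgeFinset, (w j τ + s * (-(κ j τ) + S / W) * w j τ)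
              = W + s * (-S + (S / W) * W) := by
            rw [Finset.sum_add_distrib, e3, Finset.sum_add_distrib,
              Finset.sum_neg_distrib, ← Finset.mul_sum, ← hS, ← hW]
          have e4 : W + s * (-S + (S / W) * W) = W := by
            rw [div_mul_cancel₀ _ hWpos.ne']
            ring
          rw [e1, e2, e4, hW]
          exact hsum
        · intro e he
          have h1 : (1 - ((m : ℝ) * θ + 2) * s) ^ j * w 0 e ≤ w j e := hlow e he
          rw [hflow' e he]
          calc (1 - ((m : ℝ) * θ + 2) * s) ^ (j + 1) * w 0 e
              = (1 - ((m : ℝ) * θ + 2) * s) * ((1 - ((m : ℝ) * θ + 2) * s) ^ j * w 0 e) := by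
                ring
            _ ≤ (1 - ((m : ℝ) * θ + 2) * s) * w j e :=
                mul_le_mul_of_nonneg_left h1 hfac.le
            _ ≤ (1 + s * (-(κ j e) + S / W)) * w j e :=
                mul_le_mul_of_nonneg_right (hfactor e he) (hpos e he).le
  intro j e he
  obtain ⟨hpos, hsum, hlow⟩ := main j
  refine ⟨hpos e he, hlow e he, ?_⟩
  calc w j e ≤ ∑ τ ∈ G.edgeFinset, w j τ :=
        Finset.single_le_sum (fun τ hτ => (hpos τ hτ).le) he
    _ = ∑ τ ∈ G.edgeFinset, w 0 τ := hsum
end
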